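/- With the generalized eigenbasis setup and π the s-orthogonal projection onto span{φ_1, …, φ_l}, let Ṽ := {v ∈ V : s(v, φ_j) = 0 for j = 1, …, l}, let V_0 be the a-orthogonal complement of Ṽ in V, and define the sesquilinear form b(u, v) := a(u, v) + s(πu, πv) on V. For j = 1, …, l let ψ̄_j ∈ V be the unique element satisfying b(ψ̄_j, v) = s(φ_j, πv) for all v ∈ V. Then ψ̄_1, …, ψ̄_l form a basis of V_0. -/

import Mathlib

open scoped ComplexConjugate

/-- A Hermitian positive definite sesquilinear form on a complex vector space:
linear in the first argument, Hermitian symmetric (hence conjugate-linear in the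
second argument), and with `(a v v)` real and strictly positive for `v ≠ 0`. -/
def IsHermitianPD {V : Type*} [AddCommGroup V] [Module ℂ V] (a : V → V → ℂ) : Prop :=
  (∀ u v w : V, a (u + v) w = a u w + a v w) ∧
  (∀ (c : ℂ) (u v : V), a (c • u) v = c * a u v) ∧
  (∀ u v : V, a u v = conj (a v u)) ∧
  (∀ v : V, v ≠ 0 → 0 < (a v v).re)

/-!
Write `e_k = φ_k` (`k < l`) and `b(u, v) = a(u, v) + s(πu, πv)`, which is Hermitian positive
definite. Since the `e_k` are `s`-orthonormal, `π v = ∑ₖ s(v, e_k) e_k`; in particular `π` is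
linear, `π` kills `Ṽ`, and `v - π v ∈ Ṽ`. The defining equation then reads
`b(ψ̄_j, v) = conj s(v, e_j)`, so `b(ψ̄_j, e_k) = δ_jk` and the `ψ̄_j` are independent, while
`a(ψ̄_j, w) = b(ψ̄_j, w) = 0` for `w ∈ Ṽ`. Conversely, for `u ∈ V_0` the antilinear functional
`b(u, ·)` vanishes on `Ṽ`, so it is determined by its values at the `e_k`, and
`b(u - ∑ₖ b(u, e_k) ψ̄_k, ·) = 0` forces `u = ∑ₖ b(u, e_k) ψ̄_k`.
-/

namespace IsHermitianPD

variable {V ι : Type*} [AddCommGroup V] [Module ℂ V] {a s : V → V → ℂ}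

theorem add_right (ha : IsHermitianPD a) (u v w : V) : a u (v + w) = a u v + a u w := by
  rw [ha.2.2.1, ha.1, map_add, ← ha.2.2.1, ← ha.2.2.1]

theorem smul_right (ha : IsHermitianPD a) (c : ℂ) (u v : V) : a u (c • v) = conj c * a u v := by
  rw [ha.2.2.1, ha.2.1, map_mul, ← ha.2.2.1]

def toSesq (ha : IsHermitianPD a) : V →ₗ[ℂ] V →ₗ⋆[ℂ] ℂ :=
  LinearMap.mk₂'ₛₗ (RingHom.id ℂ) (starRingEnd ℂ) a ha.1 ha.2.1 ha.add_right ha.smul_right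

@[simp]
theorem toSesq_apply (ha : IsHermitianPD a) (u v : V) : ha.toSesq u v = a u v := rfl

theorem apply_zero_right (ha : IsHermitianPD a) (u : V) : a u 0 = 0 := by
  rw [← ha.toSesq_apply, map_zero]

theorem re_apply_self_nonneg (ha : IsHermitianPD a) (v : V) : 0 ≤ (a v v).re := by
  rcases eq_or_ne v 0 with rfl | hv
  · rw [ha.apply_zero_right, Complex.zero_re]
  · exact (ha.2.2.2 v hv).le

theorem eq_zero_of_forall_eq_zero (ha : IsHermitianPD a) {u : V} (h : ∀ v, a u v = 0) :
    u = 0 := by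
  by_contra hu
  simpa [h] using ha.2.2.2 u hu

theorem add_comp (ha : IsHermitianPD a) (hs : IsHermitianPD s) (P : V →ₗ[ℂ] V) :
    IsHermitianPD fun u v => a u v + s (P u) (P v) := by
  refine ⟨fun u v w => ?_, fun c u v => ?_, fun u v => ?_, fun v hv => ?_⟩
  · simp only [← ha.toSesq_apply, ← hs.toSesq_apply, map_add, LinearMap.add_apply]
    ring
  · simp only [← ha.toSesq_apply, ← hs.toSesq_apply, map_smul, LinearMap.smul_apply,
      smul_eq_mul]
    ring
  · rw [map_add, ← ha.2.2.1, ← hs.2.2.1]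
  · simpa using add_pos_of_pos_of_nonneg (ha.2.2.2 v hv) (hs.re_apply_self_nonneg (P v))

section Projection

variable [Fintype ι]

/-- For an `s`-orthonormal family `e` this is the `s`-orthogonal projection onto
`span (range e)`. -/
def orthProj (hs : IsHermitianPD s) (e : ι → V) : V →ₗ[ℂ] V :=
  ∑ k, (hs.toSesq.flip (e k)).smulRight (e k)

variable {e ψ : ι → V}

theorem orthProj_apply (hs : IsHermitianPD s) (v : V) :
    hs.orthProj e v = ∑ k, s v (e k) • e k := by
  simp [orthProj]

theorem orthProj_eq_zero (hs : IsHermitianPD s) {w : V} (hw : ∀ k, s w (e k) = 0) :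
    hs.orthProj e w = 0 := by
  simp [hs.orthProj_apply, hw]

/-! From here on `ψ` is the family of coarse basis functions, `b(ψ j, v) = s(e j, P v)` for
`b(u, v) = a(u, v) + s(P u, P v)` and `P = hs.orthProj e`. -/

theorem apply_coarse_eq_zero (hs : IsHermitianPD s)
    (hψ : ∀ j v, a (ψ j) v + s (hs.orthProj e (ψ j)) (hs.orthProj e v) =
      s (e j) (hs.orthProj e v)) (j : ι) {w : V} (hw : ∀ k, s w (e k) = 0) :
    a (ψ j) w = 0 := by
  simpa [hs.orthProj_eq_zero hw, hs.apply_zero_right] using hψ j w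

variable [DecidableEq ι]

theorem apply_sum_smul_orthonormal (hs : IsHermitianPD s)
    (he : ∀ i j, s (e i) (e j) = if i = j then 1 else 0) (c : ι → ℂ) (k : ι) :
    s (∑ i, c i • e i) (e k) = c k := by
  rw [← hs.toSesq_apply, map_sum, LinearMap.sum_apply]
  simp [he]

theorem apply_orthProj_left (hs : IsHermitianPD s)
    (he : ∀ i j, s (e i) (e j) = if i = j then 1 else 0) (v : V) (k : ι) :
    s (hs.orthProj e v) (e k) = s v (e k) := by
  rw [hs.orthProj_apply, hs.apply_sum_smul_orthonormal he]

theorem apply_sub_orthProj (hs : IsHermitianPD s)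
    (he : ∀ i j, s (e i) (e j) = if i = j then 1 else 0) (v : V) (k : ι) :
    s (v - hs.orthProj e v) (e k) = 0 := by
  rw [← hs.toSesq_apply, map_sub, LinearMap.sub_apply, hs.toSesq_apply, hs.toSesq_apply,
    hs.apply_orthProj_left he, sub_self]

theorem eq_orthProj_of_mem_span (hs : IsHermitianPD s)
    (he : ∀ i j, s (e i) (e j) = if i = j then 1 else 0) {π : V → V}
    (hmem : ∀ v, π v ∈ Submodule.span ℂ (Set.range e))
    (horth : ∀ v k, s (v - π v) (e k) = 0) :
    π = hs.orthProj e := by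
  ext v
  obtain ⟨c, hc⟩ := (Submodule.mem_span_range_iff_exists_fun ℂ).mp (hmem v)
  rw [hs.orthProj_apply, ← hc]
  refine Finset.sum_congr rfl fun k _ => ?_
  have hk := horth v k
  rw [← hs.toSesq_apply, map_sub, LinearMap.sub_apply, sub_eq_zero, hs.toSesq_apply,
    hs.toSesq_apply, ← hc, hs.apply_sum_smul_orthonormal he] at hk
  rw [hk]

theorem coarse_apply (hs : IsHermitianPD s)
    (he : ∀ i j, s (e i) (e j) = if i = j then 1 else 0)
    (hψ : ∀ j v, a (ψ j) v + s (hs.orthProj e (ψ j)) (hs.orthProj e v) =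
      s (e j) (hs.orthProj e v)) (j : ι) (v : V) :
    a (ψ j) v + s (hs.orthProj e (ψ j)) (hs.orthProj e v) = conj (s v (e j)) := by
  rw [hψ, hs.2.2.1, hs.apply_orthProj_left he]

theorem coarse_linearIndependent (ha : IsHermitianPD a) (hs : IsHermitianPD s)
    (he : ∀ i j, s (e i) (e j) = if i = j then 1 else 0)
    (hψ : ∀ j v, a (ψ j) v + s (hs.orthProj e (ψ j)) (hs.orthProj e v) =
      s (e j) (hs.orthProj e v)) :
    LinearIndependent ℂ ψ := by
  let B := (ha.add_comp hs (hs.orthProj e)).toSesq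
  refine .of_comp (LinearMap.pi fun k => B.flip (e k) : V →ₗ[ℂ] ι → ℂ) ?_
  have hδ : (LinearMap.pi fun k => B.flip (e k) : V →ₗ[ℂ] ι → ℂ) ∘ ψ =
      fun j => Pi.single j 1 := by
    ext j k
    simp [B, hs.coarse_apply he hψ, he, Pi.single_apply, eq_comm]
  rw [hδ]
  exact Pi.linearIndependent_single_one ι ℂ

theorem coarseForm_eq_sum (ha : IsHermitianPD a) (hs : IsHermitianPD s)
    (he : ∀ i j, s (e i) (e j) = if i = j then 1 else 0) {u : V}
    (hu : ∀ w, (∀ k, s w (e k) = 0) → a u w = 0) (v : V) :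
    a u v + s (hs.orthProj e u) (hs.orthProj e v) =
      ∑ k, (a u (e k) + s (hs.orthProj e u) (hs.orthProj e (e k))) * conj (s v (e k)) := by
  let B := (ha.add_comp hs (hs.orthProj e)).toSesq
  have hperp := hs.apply_sub_orthProj he v
  have hw : B u (v - hs.orthProj e v) = 0 := by
    simp only [B, toSesq_apply, hu _ hperp, hs.orthProj_eq_zero hperp, hs.apply_zero_right,
      add_zero]
  rw [map_sub, sub_eq_zero] at hw
  calc a u v + s (hs.orthProj e u) (hs.orthProj e v) = B u (hs.orthProj e v) := hw
    _ = _ := by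
        rw [hs.orthProj_apply, map_sum]
        simp [B, mul_comm]

theorem eq_sum_smul_coarse (ha : IsHermitianPD a) (hs : IsHermitianPD s)
    (he : ∀ i j, s (e i) (e j) = if i = j then 1 else 0)
    (hψ : ∀ j v, a (ψ j) v + s (hs.orthProj e (ψ j)) (hs.orthProj e v) =
      s (e j) (hs.orthProj e v)) {u : V}
    (hu : ∀ w, (∀ k, s w (e k) = 0) → a u w = 0) :
    u = ∑ k, (a u (e k) + s (hs.orthProj e u) (hs.orthProj e (e k))) • ψ k := by
  let B := (ha.add_comp hs (hs.orthProj e)).toSesq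
  have hB : ∀ x y, B x y = a x y + s (hs.orthProj e x) (hs.orthProj e y) := fun _ _ => rfl
  rw [← sub_eq_zero]
  refine (ha.add_comp hs (hs.orthProj e)).eq_zero_of_forall_eq_zero fun v => ?_
  change B _ v = 0
  rw [map_sub, LinearMap.sub_apply, sub_eq_zero, map_sum, LinearMap.sum_apply]
  simp only [map_smul, LinearMap.smul_apply, smul_eq_mul, hB, hs.coarse_apply he hψ]
  exact ha.coarseForm_eq_sum hs he hu v

theorem span_coarse_eq (ha : IsHermitianPD a) (hs : IsHermitianPD s)
    (he : ∀ i j, s (e i) (e j) = if i = j then 1 else 0)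
    (hψ : ∀ j v, a (ψ j) v + s (hs.orthProj e (ψ j)) (hs.orthProj e v) =
      s (e j) (hs.orthProj e v)) :
    (Submodule.span ℂ (Set.range ψ) : Set V) =
      {u | ∀ w, (∀ k, s w (e k) = 0) → a u w = 0} := by
  ext u
  constructor
  · intro hu w hw
    obtain ⟨c, rfl⟩ := (Submodule.mem_span_range_iff_exists_fun ℂ).mp hu
    rw [← ha.toSesq_apply, map_sum, LinearMap.sum_apply]
    simp [hs.apply_coarse_eq_zero hψ _ hw]
  · intro hu
    rw [SetLike.mem_coe, ha.eq_sum_smul_coarse hs he hψ hu]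
    exact Submodule.sum_mem _ fun k _ => Submodule.smul_mem _ _ (Submodule.subset_span ⟨k, rfl⟩)

end Projection

end IsHermitianPD

theorem Fin.forall_lt_iff_forall_castLE {l n : ℕ} (hln : l ≤ n) {p : Fin n → Prop} :
    (∀ j : Fin n, (j : ℕ) < l → p j) ↔ ∀ k : Fin l, p (Fin.castLE hln k) := by
  rw [← Set.forall_mem_range (p := p), Fin.range_castLE]
  rfl

theorem psibar_basis_of_coarse_space_general
    {V : Type*} [AddCommGroup V] [Module ℂ V]
    (n : ℕ)
    (a s : V → V → ℂ) (ha : IsHermitianPD a) (hs : IsHermitianPD s)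
    (φ : Fin n → V)
    (horth : ∀ j k : Fin n, j ≠ k → s (φ j) (φ k) = 0 ∧ a (φ j) (φ k) = 0)
    (hnorm : ∀ j : Fin n, s (φ j) (φ j) = 1)
    (l : ℕ) (hln : l ≤ n)
    (π : V → V)
    (hπmem : ∀ v : V, π v ∈ Submodule.span ℂ (φ '' {j : Fin n | (j : ℕ) < l}))
    (hπorth : ∀ (v : V) (j : Fin n), (j : ℕ) < l → s (v - π v) (φ j) = 0)
    (ψbar : Fin l → V)
    (hψbar : ∀ (j : Fin l) (v : V),
      a (ψbar j) v + s (π (ψbar j)) (π v) = s (φ (Fin.castLE hln j)) (π v)) :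
    LinearIndependent ℂ ψbar ∧
    (Submodule.span ℂ (Set.range ψbar) : Set V) =
      {u : V | ∀ w : V, (∀ j : Fin n, (j : ℕ) < l → s w (φ j) = 0) → a u w = 0} := by
  set e := φ ∘ Fin.castLE hln
  have he : ∀ i j, s (e i) (e j) = if i = j then 1 else 0 := by
    intro i j
    split_ifs with hij
    · exact hij ▸ hnorm _
    · exact (horth _ _ ((Fin.castLE_injective hln).ne hij)).1
  have hrange : φ '' {j : Fin n | (j : ℕ) < l} = Set.range e := by
    rw [Set.range_comp, Fin.range_castLE]
  obtain rfl : π = hs.orthProj e := hs.eq_orthProj_of_mem_span he (by simpa [hrange] using hπmem)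
    fun v => (Fin.forall_lt_iff_forall_castLE hln).mp (hπorth v)
  simp only [Fin.forall_lt_iff_forall_castLE hln]
  exact ⟨ha.coarse_linearIndependent hs he hψbar, ha.span_coarse_eq hs he hψbar⟩

/-- The coarse basis functions `ψ̄_j` defined by `b(ψ̄_j, v) = s(φ_j, πv)` with
`b(u,v) = a(u,v) + s(πu, πv)` (formulas (2.22)–(2.23) of the paper, the
construction of [Wang–Chung–Kim 2020]) form a basis of the coarse space `V_0`,
the `a`-orthogonal complement of `Ṽ = {v : s(v, φ_j) = 0, j ≤ l}`. -/
theorem psibar_basis_of_coarse_space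
    {V : Type*} [AddCommGroup V] [Module ℂ V] [FiniteDimensional ℂ V]
    (n : ℕ) (hn : 1 ≤ n) (hdim : Module.finrank ℂ V = n)
    (a s : V → V → ℂ) (ha : IsHermitianPD a) (hs : IsHermitianPD s)
    (φ : Fin n → V) (lam : Fin n → ℝ)
    (hindep : LinearIndependent ℂ φ)
    (hspan : Submodule.span ℂ (Set.range φ) = ⊤)
    (hmono : ∀ j k : Fin n, j ≤ k → lam k ≤ lam j)
    (hpos : ∀ j : Fin n, 0 < lam j)
    (heig : ∀ (j : Fin n) (w : V), s (φ j) w = (lam j : ℂ) * a (φ j) w)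
    (horth : ∀ j k : Fin n, j ≠ k → s (φ j) (φ k) = 0 ∧ a (φ j) (φ k) = 0)
    (hnorm : ∀ j : Fin n, s (φ j) (φ j) = 1)
    (Lam : ℝ) (hLam : 1 < Lam)
    (l : ℕ) (hln : l ≤ n)
    (hge : ∀ j : Fin n, (j : ℕ) < l → Lam ≤ lam j)
    (hlt : ∀ j : Fin n, l ≤ (j : ℕ) → lam j < Lam)
    (π : V → V)
    (hπmem : ∀ v : V, π v ∈ Submodule.span ℂ (φ '' {j : Fin n | (j : ℕ) < l}))
    (hπorth : ∀ (v : V) (j : Fin n), (j : ℕ) < l → s (v - π v) (φ j) = 0)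
    (ψbar : Fin l → V)
    (hψbar : ∀ (j : Fin l) (v : V),
      a (ψbar j) v + s (π (ψbar j)) (π v) = s (φ (Fin.castLE hln j)) (π v)) :
    LinearIndependent ℂ ψbar ∧
    (Submodule.span ℂ (Set.range ψbar) : Set V) =
      {u : V | ∀ w : V, (∀ j : Fin n, (j : ℕ) < l → s w (φ j) = 0) → a u w = 0} :=
  psibar_basis_of_coarse_space_general n a s ha hs φ horth hnorm l hln π hπmem hπorth ψbar hψbar
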